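/- Let f : ℍ^{N×S} → ℝ be ℝ-differentiable at Q. Then the following are equivalent: (a) the real Fréchet derivative of f at Q is the zero map (equivalently, all 4NS real partial derivatives of f at Q vanish); (b) ∂f/∂Q = 0 at Q; (c) ∂f/∂Q* = 0 at Q; (d) ∂f/∂Q^ν = 0 at Q for every ν ∈ {1,i,j,k}; (e) ∂f/∂Q^{ν*} = 0 at Q for every ν ∈ {1,i,j,k}. Hence stationary points of f can be found by setting either ∂f/∂Q or ∂f/∂Q* to zero. -/

import Mathlib

open scoped Quaternion

noncomputable section

/-- The imaginary unit `i` of the quaternions. -/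
def qI : ℍ[ℝ] := ⟨0, 1, 0, 0⟩
/-- The imaginary unit `j` of the quaternions. -/
def qJ : ℍ[ℝ] := ⟨0, 0, 1, 0⟩
/-- The imaginary unit `k` of the quaternions. -/
def qK : ℍ[ℝ] := ⟨0, 0, 0, 1⟩

/-- The `N × S` quaternion matrix with entry `d` at position `(n,s)` and `0` elsewhere. -/
def single {N S : ℕ} (n : Fin N) (s : Fin S) (d : ℍ[ℝ]) : Fin N → Fin S → ℍ[ℝ] :=
  Pi.single n (Pi.single s d)

/-- Real directional (Fréchet) derivative of a real-valued function of a matrix variable, in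
the direction `d` at the single entry `(n,s)` (the other entries held fixed). -/
def pdR {N S : ℕ} (f : (Fin N → Fin S → ℍ[ℝ]) → ℝ) (Q : Fin N → Fin S → ℍ[ℝ])
    (n : Fin N) (s : Fin S) (d : ℍ[ℝ]) : ℝ :=
  fderiv ℝ f Q (single n s d)

/-- Left GHR derivative `∂f/∂q_{ns}^ν` of a real-valued function `f` with respect to the entry
`q_{ns}`: `¼(∂f/∂q_a − (∂f/∂q_b) i^ν − (∂f/∂q_c) j^ν − (∂f/∂q_d) k^ν)`, `x^ν = ν x ν⁻¹`. -/
def ghrER {N S : ℕ} (ν : ℍ[ℝ]) (f : (Fin N → Fin S → ℍ[ℝ]) → ℝ)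
    (Q : Fin N → Fin S → ℍ[ℝ]) (n : Fin N) (s : Fin S) : ℍ[ℝ] :=
  (1 / 4 : ℝ) • ((pdR f Q n s 1) • (1 : ℍ[ℝ]) - (pdR f Q n s qI) • (ν * qI * ν⁻¹)
    - (pdR f Q n s qJ) • (ν * qJ * ν⁻¹) - (pdR f Q n s qK) • (ν * qK * ν⁻¹))

/-- Conjugate left GHR derivative `∂f/∂q_{ns}^{ν*}` of a real-valued function `f`. -/
def ghrStarER {N S : ℕ} (ν : ℍ[ℝ]) (f : (Fin N → Fin S → ℍ[ℝ]) → ℝ)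
    (Q : Fin N → Fin S → ℍ[ℝ]) (n : Fin N) (s : Fin S) : ℍ[ℝ] :=
  (1 / 4 : ℝ) • ((pdR f Q n s 1) • (1 : ℍ[ℝ]) + (pdR f Q n s qI) • (ν * qI * ν⁻¹)
    + (pdR f Q n s qJ) • (ν * qJ * ν⁻¹) + (pdR f Q n s qK) • (ν * qK * ν⁻¹))

/-!
At `ν = 1` the GHR derivatives have real components `¼(∂f/∂q_a, ∓∂f/∂q_b, ∓∂f/∂q_c, ∓∂f/∂q_d)`,
so `∂f/∂q_{ns}` and `∂f/∂q_{ns}*` each vanish exactly when the four real partial derivatives in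
the entry `q_{ns}` do. By linearity these partials determine the Fréchet derivative, through its
values on the matrices with a single nonzero entry `1, i, j` or `k`. Conversely, a vanishing
Fréchet derivative kills every GHR derivative, whatever `ν`.
-/

lemma qI_components : qI.re = 0 ∧ qI.imI = 1 ∧ qI.imJ = 0 ∧ qI.imK = 0 := ⟨rfl, rfl, rfl, rfl⟩

lemma qJ_components : qJ.re = 0 ∧ qJ.imI = 0 ∧ qJ.imJ = 1 ∧ qJ.imK = 0 := ⟨rfl, rfl, rfl, rfl⟩

lemma qK_components : qK.re = 0 ∧ qK.imI = 0 ∧ qK.imJ = 0 ∧ qK.imK = 1 := ⟨rfl, rfl, rfl, rfl⟩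

lemma quaternion_eq_re_smul_one_add (q : ℍ[ℝ]) :
    q = q.re • (1 : ℍ[ℝ]) + q.imI • qI + q.imJ • qJ + q.imK • qK := by
  ext <;> simp [qI_components, qJ_components, qK_components]

lemma smul_one_sub_smul_qI_sub_eq_zero_iff (a b c d : ℝ) :
    a • (1 : ℍ[ℝ]) - b • qI - c • qJ - d • qK = 0 ↔ a = 0 ∧ b = 0 ∧ c = 0 ∧ d = 0 := by
  simp [Quaternion.ext_iff, qI_components, qJ_components, qK_components]

lemma smul_one_add_smul_qI_add_eq_zero_iff (a b c d : ℝ) :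
    a • (1 : ℍ[ℝ]) + b • qI + c • qJ + d • qK = 0 ↔ a = 0 ∧ b = 0 ∧ c = 0 ∧ d = 0 := by
  simp [Quaternion.ext_iff, qI_components, qJ_components, qK_components]

section

variable {N S : ℕ}

lemma single_add (n : Fin N) (s : Fin S) (d e : ℍ[ℝ]) :
    single n s (d + e) = single n s d + single n s e := by
  simp only [single, Pi.single_add]

lemma single_smul (n : Fin N) (s : Fin S) (r : ℝ) (d : ℍ[ℝ]) :
    single n s (r • d) = r • single n s d := by
  simp only [single, Pi.single_smul]

lemma linearMap_eq_zero_of_single {M : Type*} [AddCommMonoid M] [Module ℝ M]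
    (L : (Fin N → Fin S → ℍ[ℝ]) →ₗ[ℝ] M) (h : ∀ n s d, L (single n s d) = 0) : L = 0 :=
  LinearMap.pi_ext' fun n => LinearMap.pi_ext fun s d => by simpa [single] using h n s d

variable (f : (Fin N → Fin S → ℍ[ℝ]) → ℝ) (Q : Fin N → Fin S → ℍ[ℝ]) (n : Fin N) (s : Fin S)

lemma pdR_eq (d : ℍ[ℝ]) :
    pdR f Q n s d = d.re * pdR f Q n s 1 + d.imI * pdR f Q n s qI
      + d.imJ * pdR f Q n s qJ + d.imK * pdR f Q n s qK := by
  conv_lhs => rw [pdR, quaternion_eq_re_smul_one_add d]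
  simp only [single_add, single_smul, map_add, map_smul, smul_eq_mul, pdR]

lemma forall_pdR_eq_zero_iff :
    (∀ d, pdR f Q n s d = 0) ↔ pdR f Q n s 1 = 0 ∧ pdR f Q n s qI = 0
      ∧ pdR f Q n s qJ = 0 ∧ pdR f Q n s qK = 0 := by
  refine ⟨fun h => ⟨h 1, h qI, h qJ, h qK⟩, fun ⟨h1, hI, hJ, hK⟩ d => ?_⟩
  rw [pdR_eq, h1, hI, hJ, hK]
  ring

lemma fderiv_eq_zero_iff_forall_pdR_eq_zero :
    fderiv ℝ f Q = 0 ↔ ∀ n s d, pdR f Q n s d = 0 :=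
  ⟨fun h n s d => by rw [pdR, h, zero_apply],
    fun h => ContinuousLinearMap.coe_injective (linearMap_eq_zero_of_single _ h)⟩

lemma ghrER_one_eq_zero_iff :
    ghrER 1 f Q n s = 0 ↔ ∀ d, pdR f Q n s d = 0 := by
  rw [forall_pdR_eq_zero_iff, ← smul_one_sub_smul_qI_sub_eq_zero_iff, ghrER, smul_eq_zero]
  simp

lemma ghrStarER_one_eq_zero_iff :
    ghrStarER 1 f Q n s = 0 ↔ ∀ d, pdR f Q n s d = 0 := by
  rw [forall_pdR_eq_zero_iff, ← smul_one_add_smul_qI_add_eq_zero_iff, ghrStarER, smul_eq_zero]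
  simp

variable {f Q n s}

lemma ghrER_eq_zero (h : ∀ d, pdR f Q n s d = 0) (ν : ℍ[ℝ]) : ghrER ν f Q n s = 0 := by
  simp [ghrER, h]

lemma ghrStarER_eq_zero (h : ∀ d, pdR f Q n s d = 0) (ν : ℍ[ℝ]) : ghrStarER ν f Q n s = 0 := by
  simp [ghrStarER, h]

end

theorem stationary_point_tfae_general {N S : ℕ}
    (f : (Fin N → Fin S → ℍ[ℝ]) → ℝ) (Q : Fin N → Fin S → ℍ[ℝ]) :
    List.TFAE
      [fderiv ℝ f Q = 0,
       (fun (n : Fin N) (s : Fin S) => ghrER (1 : ℍ[ℝ]) f Q n s) = fun _ _ => 0,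
       (fun (n : Fin N) (s : Fin S) => ghrStarER (1 : ℍ[ℝ]) f Q n s) = fun _ _ => 0,
       ∀ ν ∈ ({1, qI, qJ, qK} : Set ℍ[ℝ]),
         (fun (n : Fin N) (s : Fin S) => ghrER ν f Q n s) = fun _ _ => 0,
       ∀ ν ∈ ({1, qI, qJ, qK} : Set ℍ[ℝ]),
         (fun (n : Fin N) (s : Fin S) => ghrStarER ν f Q n s) = fun _ _ => 0] := by
  simp only [funext_iff, fderiv_eq_zero_iff_forall_pdR_eq_zero, ghrER_one_eq_zero_iff,
    ghrStarER_one_eq_zero_iff]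
  tfae_have 1 → 4 := fun h _ _ n s => ghrER_eq_zero (h n s) _
  tfae_have 1 → 5 := fun h _ _ n s => ghrStarER_eq_zero (h n s) _
  tfae_have 4 → 2 := fun h n s => (ghrER_one_eq_zero_iff f Q n s).1 (h 1 (by simp) n s)
  tfae_have 5 → 3 := fun h n s => (ghrStarER_one_eq_zero_iff f Q n s).1 (h 1 (by simp) n s)
  tfae_have 2 → 1 := id
  tfae_have 3 → 1 := id
  tfae_finish

/-- **Equivalent conditions for a stationary point** (Theorem 3): for a real-valued
`f : ℍ^{N×S} → ℝ` differentiable at `Q`, vanishing of the real Fréchet derivative, of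
`∂f/∂Q`, of `∂f/∂Q*`, of all `∂f/∂Q^ν`, and of all `∂f/∂Q^{ν*}` for `ν ∈ {1,i,j,k}`
are equivalent. -/
theorem stationary_point_tfae {N S : ℕ}
    (f : (Fin N → Fin S → ℍ[ℝ]) → ℝ) (Q : Fin N → Fin S → ℍ[ℝ])
    (hf : DifferentiableAt ℝ f Q) :
    List.TFAE
      [fderiv ℝ f Q = 0,
       (fun (n : Fin N) (s : Fin S) => ghrER (1 : ℍ[ℝ]) f Q n s) = fun _ _ => 0,
       (fun (n : Fin N) (s : Fin S) => ghrStarER (1 : ℍ[ℝ]) f Q n s) = fun _ _ => 0,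
       ∀ ν ∈ ({1, qI, qJ, qK} : Set ℍ[ℝ]),
         (fun (n : Fin N) (s : Fin S) => ghrER ν f Q n s) = fun _ _ => 0,
       ∀ ν ∈ ({1, qI, qJ, qK} : Set ℍ[ℝ]),
         (fun (n : Fin N) (s : Fin S) => ghrStarER ν f Q n s) = fun _ _ => 0] :=
  stationary_point_tfae_general f Q
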